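/- arXiv:2005.03452 — 2 statements merged into one kernel-verified Lean document; each statement's English description precedes it below -/
import Mathlib

section
/- Let W be a real n×m matrix, let G : ℝ^n → ℝ be a convex function, and let C ⊆ ℝ^n be a nonempty closed convex set. For x ∈ ℝ^m define F_x(z) = (1/2)‖z − Wx‖² + G(z). If z₁ minimizes F_{x₁} over C and z₂ minimizes F_{x₂} over C, then ‖z₁ − z₂‖ ≤ ‖W‖₂·‖x₁ − x₂‖, where ‖W‖₂ is the operator norm of W with respect to the Euclidean norms; i.e., the map P_{0,W,G} sending x to the minimizer of F_x over C is ‖W‖₂-Lipschitz. -/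
/-!
Perturbing a minimizer `z` of `u ↦ ½‖u - w‖² + G u` over `C` towards another point `z' ∈ C`
and letting the step size go to zero gives the variational inequality
`0 ≤ ⟪z - w, z' - z⟫ + G z' - G z`. Adding the two inequalities for `(w₁, z₁)` and `(w₂, z₂)`
cancels `G` and leaves `‖z₁ - z₂‖² ≤ ⟪w₁ - w₂, z₁ - z₂⟫`, so the proximal map is
nonexpansive; composing with `x ↦ W x` gives the Lipschitz constant `‖W‖₂`.
-/

open Matrix Filter Topology

open scoped RealInnerProductSpace

lemma nonneg_of_forall_mem_Ioc_nonneg_add_mul {a b : ℝ}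
    (h : ∀ t ∈ Set.Ioc (0 : ℝ) 1, 0 ≤ a + t * b) : 0 ≤ a := by
  have hlim : Tendsto (fun t : ℝ => a + t * b) (𝓝[>] 0) (𝓝 a) := by
    have hcont : Continuous (fun t : ℝ => a + t * b) := by fun_prop
    simpa using (hcont.tendsto 0).mono_left nhdsWithin_le_nhds
  exact ge_of_tendsto hlim (Filter.mem_of_superset (Ioc_mem_nhdsGT one_pos) h)

section Prox

variable {E : Type*} [NormedAddCommGroup E] [InnerProductSpace ℝ E]

noncomputable def proxObjective (G : E → ℝ) (w u : E) : ℝ := 1 / 2 * ‖u - w‖ ^ 2 + G u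

variable {C : Set E} {G : E → ℝ}

lemma norm_sub_lineMap_sq (w z z' : E) (t : ℝ) :
    ‖(1 - t) • z + t • z' - w‖ ^ 2
      = ‖z - w‖ ^ 2 + 2 * t * ⟪z - w, z' - z⟫ + t ^ 2 * ‖z' - z‖ ^ 2 := by
  have hsplit : (1 - t) • z + t • z' - w = (z - w) + t • (z' - z) := by module
  rw [hsplit, norm_add_sq_real, real_inner_smul_right, norm_smul, Real.norm_eq_abs, mul_pow,
    sq_abs]
  ring

lemma IsMinOn.inner_sub_add_sub_nonneg {w z z' : E} (hC : Convex ℝ C) (hG : ConvexOn ℝ C G)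
    (hmin : IsMinOn (proxObjective G w) C z) (hz : z ∈ C) (hz' : z' ∈ C) :
    0 ≤ ⟪z - w, z' - z⟫ + (G z' - G z) := by
  refine nonneg_of_forall_mem_Ioc_nonneg_add_mul (b := 1 / 2 * ‖z' - z‖ ^ 2) fun t ⟨ht, ht1⟩ => ?_
  have hmem : (1 - t) • z + t • z' ∈ C := hC hz hz' (by linarith) ht.le (by ring)
  have hle := isMinOn_iff.mp hmin _ hmem
  have hGt : G ((1 - t) • z + t • z') ≤ (1 - t) * G z + t * G z' :=
    hG.2 hz hz' (by linarith) ht.le (by ring)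
  simp only [proxObjective, norm_sub_lineMap_sq] at hle
  -- `hle` and `hGt` together say `0 ≤ t * (the claimed quantity)`.
  have hscaled : t * 0 ≤ t * (⟪z - w, z' - z⟫ + (G z' - G z) + t * (1 / 2 * ‖z' - z‖ ^ 2)) := by
    nlinarith
  linarith [le_of_mul_le_mul_left hscaled ht]

lemma norm_sub_sq_le_inner_of_isMinOn_proxObjective {w₁ w₂ z₁ z₂ : E} (hC : Convex ℝ C)
    (hG : ConvexOn ℝ C G) (hz₁ : z₁ ∈ C) (hz₂ : z₂ ∈ C)
    (hmin₁ : IsMinOn (proxObjective G w₁) C z₁) (hmin₂ : IsMinOn (proxObjective G w₂) C z₂) :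
    ‖z₁ - z₂‖ ^ 2 ≤ ⟪w₁ - w₂, z₁ - z₂⟫ := by
  have h₁ := hmin₁.inner_sub_add_sub_nonneg hC hG hz₁ hz₂
  have h₂ := hmin₂.inner_sub_add_sub_nonneg hC hG hz₂ hz₁
  have hsum : ⟪z₁ - w₁, z₂ - z₁⟫ + ⟪z₂ - w₂, z₁ - z₂⟫ = ⟪w₁ - w₂, z₁ - z₂⟫ - ‖z₁ - z₂‖ ^ 2 := by
    rw [← real_inner_self_eq_norm_sq]
    simp only [inner_sub_left, inner_sub_right]
    ring
  linarith

lemma norm_sub_le_of_isMinOn_proxObjective {w₁ w₂ z₁ z₂ : E} (hC : Convex ℝ C)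
    (hG : ConvexOn ℝ C G) (hz₁ : z₁ ∈ C) (hz₂ : z₂ ∈ C)
    (hmin₁ : IsMinOn (proxObjective G w₁) C z₁) (hmin₂ : IsMinOn (proxObjective G w₂) C z₂) :
    ‖z₁ - z₂‖ ≤ ‖w₁ - w₂‖ := by
  have hsq : ‖z₁ - z₂‖ * ‖z₁ - z₂‖ ≤ ‖w₁ - w₂‖ * ‖z₁ - z₂‖ := by
    rw [← sq]
    exact (norm_sub_sq_le_inner_of_isMinOn_proxObjective hC hG hz₁ hz₂ hmin₁ hmin₂).trans
      (real_inner_le_norm _ _)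
  rcases (norm_nonneg (z₁ - z₂)).eq_or_lt with h0 | hpos
  · exact h0 ▸ norm_nonneg _
  · exact le_of_mul_le_mul_right hsq hpos

end Prox

theorem stmt5_general {n m : ℕ}
    (W : Matrix (Fin n) (Fin m) ℝ)
    (G : EuclideanSpace ℝ (Fin n) → ℝ) (hG : ConvexOn ℝ Set.univ G)
    (C : Set (EuclideanSpace ℝ (Fin n)))
    (hCcv : Convex ℝ C)
    (x₁ x₂ : EuclideanSpace ℝ (Fin m))
    (z₁ z₂ : EuclideanSpace ℝ (Fin n))
    (hz₁ : z₁ ∈ C ∧ ∀ z ∈ C,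
      (1/2) * ‖z₁ - Matrix.toEuclideanLin W x₁‖ ^ 2 + G z₁
        ≤ (1/2) * ‖z - Matrix.toEuclideanLin W x₁‖ ^ 2 + G z)
    (hz₂ : z₂ ∈ C ∧ ∀ z ∈ C,
      (1/2) * ‖z₂ - Matrix.toEuclideanLin W x₂‖ ^ 2 + G z₂
        ≤ (1/2) * ‖z - Matrix.toEuclideanLin W x₂‖ ^ 2 + G z) :
    ‖z₁ - z₂‖ ≤ ‖LinearMap.toContinuousLinearMap (Matrix.toEuclideanLin W)‖ * ‖x₁ - x₂‖ := by
  set T := LinearMap.toContinuousLinearMap (Matrix.toEuclideanLin W)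
  have hprox : ‖z₁ - z₂‖ ≤ ‖T x₁ - T x₂‖ :=
    norm_sub_le_of_isMinOn_proxObjective hCcv (hG.subset (Set.subset_univ C) hCcv) hz₁.1 hz₂.1
      (isMinOn_iff.mpr hz₁.2) (isMinOn_iff.mpr hz₂.2)
  calc ‖z₁ - z₂‖ ≤ ‖T (x₁ - x₂)‖ := by rwa [map_sub]
    _ ≤ ‖T‖ * ‖x₁ - x₂‖ := T.le_opNorm _

/-- (Lemma 2 of the paper: `P_{0,W,G}` is `‖W‖₂`-Lipschitz.) With
`F_x(z) = (1/2)‖z − Wx‖² + G(z)`, if `z₁` minimizes `F_{x₁}` over the nonempty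
closed convex set `C` and `z₂` minimizes `F_{x₂}` over `C`, then
`‖z₁ − z₂‖ ≤ ‖W‖₂ ‖x₁ − x₂‖`, where `‖W‖₂` is the Euclidean operator norm of `W`. -/
theorem stmt5 {n m : ℕ}
    (W : Matrix (Fin n) (Fin m) ℝ)
    (G : EuclideanSpace ℝ (Fin n) → ℝ) (hG : ConvexOn ℝ Set.univ G)
    (C : Set (EuclideanSpace ℝ (Fin n)))
    (hCne : C.Nonempty) (hCcl : IsClosed C) (hCcv : Convex ℝ C)
    (x₁ x₂ : EuclideanSpace ℝ (Fin m))
    (z₁ z₂ : EuclideanSpace ℝ (Fin n))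
    (hz₁ : z₁ ∈ C ∧ ∀ z ∈ C,
      (1/2) * ‖z₁ - Matrix.toEuclideanLin W x₁‖ ^ 2 + G z₁
        ≤ (1/2) * ‖z - Matrix.toEuclideanLin W x₁‖ ^ 2 + G z)
    (hz₂ : z₂ ∈ C ∧ ∀ z ∈ C,
      (1/2) * ‖z₂ - Matrix.toEuclideanLin W x₂‖ ^ 2 + G z₂
        ≤ (1/2) * ‖z - Matrix.toEuclideanLin W x₂‖ ^ 2 + G z) :
    ‖z₁ - z₂‖ ≤ ‖LinearMap.toContinuousLinearMap (Matrix.toEuclideanLin W)‖ * ‖x₁ - x₂‖ :=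
  stmt5_general W G hG C hCcv x₁ x₂ z₁ z₂ hz₁ hz₂
end

section
/- In the L-layer lifted regression/reconstruction network with β₁ = β₂ = ··· = β_{L−1} = 1 and β_L = 0 (i.e., the output layer is a pure regression layer), the mapping from the input x to the last-layer activations z*_L(x) is Lipschitz continuous with constant at most ‖W_{L−1}‖₂: if z* minimizes E(·; x) over C₁×···×C_L and z*' minimizes E(·; x') over C₁×···×C_L, then ‖z*_L − z*'_L‖ ≤ ‖W_{L−1}‖₂·‖x − x'‖. -/
/-!
Write `δ = z - z'` for the difference of two minimizers. Each layer `z (m + 1)` minimizes the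
energy over the convex set `C (m + 1)` when the other layers are fixed, which gives a variational
inequality for the partial gradient; adding the inequalities for `z` and `z'` cancels the biases
and leaves `⟪∇_{m+1} E⁰(δ), δ (m + 1)⟫ ≤ 0` for the homogeneous energy `E⁰`. This partial gradient
is the sum of the contributions of links `m` and `m + 1`, and Euler's identity for the quadratic
link energies propagates the inequality backwards from the output layer to
`⟪∂_out E⁰_m(δ), δ (m + 1)⟫ ≤ 0` for every link `m`. With `β (m + 1) = 1` this reads
`‖δ (m + 1)‖² + ‖Wᵀδ (m + 1)‖² ≤ 2 ⟪δ m, Wᵀδ (m + 1)⟫`, hence `‖δ (m + 1)‖ ≤ ‖δ m‖`; with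
`β L = 0` it reads `‖δ L‖² ≤ ⟪W δ (L - 1), δ L⟫`, hence `‖δ L‖ ≤ ‖W‖ ‖δ (L - 1)‖`.
-/

open Matrix Finset Filter Topology ContinuousLinearMap
open scoped RealInnerProductSpace

lemma nonneg_of_forall_nonneg_mul_add_mul_sq {α γ : ℝ}
    (h : ∀ t : ℝ, 0 < t → t ≤ 1 → 0 ≤ α * t + γ * t ^ 2) : 0 ≤ α := by
  have hlim : Tendsto (fun t : ℝ => α + γ * t) (𝓝[>] 0) (𝓝 α) := by
    refine tendsto_nhdsWithin_of_tendsto_nhds ?_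
    exact (by fun_prop : Continuous fun t : ℝ => α + γ * t).tendsto' 0 α (by simp)
  refine ge_of_tendsto hlim ?_
  filter_upwards [Ioc_mem_nhdsGT one_pos] with t ⟨ht0, ht1⟩
  have := h t ht0 ht1
  nlinarith

lemma norm_add_smul_sq {F : Type*} [NormedAddCommGroup F] [InnerProductSpace ℝ F]
    (p v : F) (t : ℝ) : ‖p + t • v‖ ^ 2 = ‖p‖ ^ 2 + 2 * t * ⟪p, v⟫ + t ^ 2 * ‖v‖ ^ 2 := by
  rw [norm_add_sq_real, real_inner_smul_right, norm_smul, mul_pow, Real.norm_eq_abs, sq_abs]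
  ring

lemma norm_le_of_norm_sq_le_inner {F : Type*} [NormedAddCommGroup F] [InnerProductSpace ℝ F]
    {u w : F} (h : ‖u‖ ^ 2 ≤ ⟪w, u⟫) : ‖u‖ ≤ ‖w‖ := by
  have := h.trans (real_inner_le_norm w u)
  nlinarith [norm_nonneg u, norm_nonneg w]

noncomputable section

namespace LiftedNetwork

variable {E : ℕ → Type*}

def feasibleSet (L : ℕ) (C : ∀ k, Set (E k)) (x : E 0) : Set (∀ k, E k) :=
  {z | z 0 = x ∧ ∀ k, 1 ≤ k → k ≤ L → z k ∈ C k}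

lemma update_mem_feasibleSet {L k : ℕ} {C : ∀ k, Set (E k)} {x : E 0} {z : ∀ k, E k}
    (hz : z ∈ feasibleSet L C x) (hk : 1 ≤ k) {u : E k} (hu : u ∈ C k) :
    Function.update z k u ∈ feasibleSet L C x := by
  refine ⟨by rw [Function.update_of_ne (by omega), hz.1], fun j hj hjL => ?_⟩
  rcases eq_or_ne j k with rfl | hjk
  · rwa [Function.update_self]
  · rw [Function.update_of_ne hjk]
    exact hz.2 j hj hjL

variable [∀ k, NormedAddCommGroup (E k)] [∀ k, InnerProductSpace ℝ (E k)]
  [∀ k, CompleteSpace (E k)]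

variable (A : ∀ k, E k →L[ℝ] E (k + 1)) (b : ∀ k, E (k + 1)) (c : ∀ k, E k) (β : ℕ → ℝ)

def fwdResidual (z : ∀ k, E k) (j : ℕ) : E (j + 1) := z (j + 1) - A j (z j) - b j

def bwdResidual (z : ∀ k, E k) (j : ℕ) : E j := adjoint (A j) (z (j + 1)) - z j - c j

def linkEnergy (z : ∀ k, E k) (j : ℕ) : ℝ :=
  ‖fwdResidual A b z j‖ ^ 2 + β (j + 1) * ‖bwdResidual A c z j‖ ^ 2

def energy (L : ℕ) (z : ∀ k, E k) : ℝ := (1 / 2) * ∑ j ∈ range L, linkEnergy A b c β z j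

/-- `outputGrad z j` and `inputGrad z j` are the gradients of `linkEnergy z j / 2` in `z (j + 1)`
and in `z j`; `layerGrad L z m` is the gradient of `energy L` in `z (m + 1)`. -/
def outputGrad (z : ∀ k, E k) (j : ℕ) : E (j + 1) :=
  fwdResidual A b z j + β (j + 1) • A j (bwdResidual A c z j)

def inputGrad (z : ∀ k, E k) (j : ℕ) : E j :=
  -(adjoint (A j) (fwdResidual A b z j) + β (j + 1) • bwdResidual A c z j)

def layerGrad (L : ℕ) (z : ∀ k, E k) (m : ℕ) : E (m + 1) :=
  outputGrad A b c β z m + if m + 1 < L then inputGrad A b c β z (m + 1) else 0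

lemma linkEnergy_update_of_ne (z : ∀ k, E k) {j k : ℕ} (hj : j ≠ k) (hj' : j + 1 ≠ k) (u : E k) :
    linkEnergy A b c β (Function.update z k u) j = linkEnergy A b c β z j := by
  simp only [linkEnergy, fwdResidual, bwdResidual, Function.update_of_ne hj,
    Function.update_of_ne hj']

lemma linkEnergy_update_succ (z : ∀ k, E k) (j : ℕ) (v : E (j + 1)) (t : ℝ) :
    linkEnergy A b c β (Function.update z (j + 1) (z (j + 1) + t • v)) j =
      linkEnergy A b c β z j + 2 * t * ⟪outputGrad A b c β z j, v⟫
        + t ^ 2 * (‖v‖ ^ 2 + β (j + 1) * ‖adjoint (A j) v‖ ^ 2) := by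
  have hfwd : fwdResidual A b (Function.update z (j + 1) (z (j + 1) + t • v)) j =
      fwdResidual A b z j + t • v := by
    simp only [fwdResidual, Function.update_self, Function.update_of_ne (Nat.succ_ne_self j).symm]
    abel
  have hbwd : bwdResidual A c (Function.update z (j + 1) (z (j + 1) + t • v)) j =
      bwdResidual A c z j + t • adjoint (A j) v := by
    simp only [bwdResidual, Function.update_self, Function.update_of_ne (Nat.succ_ne_self j).symm,
      map_add, map_smul]
    abel
  rw [linkEnergy, linkEnergy, hfwd, hbwd, norm_add_smul_sq, norm_add_smul_sq, outputGrad,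
    inner_add_left, real_inner_smul_left, ← adjoint_inner_right]
  ring

lemma linkEnergy_update_self (z : ∀ k, E k) (j : ℕ) (v : E j) (t : ℝ) :
    linkEnergy A b c β (Function.update z j (z j + t • v)) j =
      linkEnergy A b c β z j + 2 * t * ⟪inputGrad A b c β z j, v⟫
        + t ^ 2 * (‖A j v‖ ^ 2 + β (j + 1) * ‖v‖ ^ 2) := by
  have hfwd : fwdResidual A b (Function.update z j (z j + t • v)) j =
      fwdResidual A b z j + (-t) • A j v := by
    simp only [fwdResidual, Function.update_self, Function.update_of_ne (Nat.succ_ne_self j),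
      map_add, map_smul, neg_smul]
    abel
  have hbwd : bwdResidual A c (Function.update z j (z j + t • v)) j =
      bwdResidual A c z j + (-t) • v := by
    simp only [bwdResidual, Function.update_self, Function.update_of_ne (Nat.succ_ne_self j),
      neg_smul]
    abel
  rw [linkEnergy, linkEnergy, hfwd, hbwd, norm_add_smul_sq, norm_add_smul_sq, inputGrad,
    inner_neg_left, inner_add_left, real_inner_smul_left, adjoint_inner_left]
  ring

lemma linkEnergy_nonneg (z : ∀ k, E k) {j : ℕ} (hβ : 0 ≤ β (j + 1)) :
    0 ≤ linkEnergy A b c β z j :=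
  add_nonneg (sq_nonneg _) (mul_nonneg hβ (sq_nonneg _))

lemma energy_update_add_smul {L m : ℕ} (hm : m < L) (z : ∀ k, E k) (v : E (m + 1)) :
    ∃ γ : ℝ, ∀ t : ℝ, energy A b c β L (Function.update z (m + 1) (z (m + 1) + t • v)) =
      energy A b c β L z + t * ⟪layerGrad A b c β L z m, v⟫ + t ^ 2 * γ := by
  set q₁ := ‖v‖ ^ 2 + β (m + 1) * ‖adjoint (A m) v‖ ^ 2
  set q₂ := ‖A (m + 1) v‖ ^ 2 + β (m + 1 + 1) * ‖v‖ ^ 2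
  refine ⟨(1 / 2) * (q₁ + if m + 1 < L then q₂ else 0), fun t => ?_⟩
  have hterm : ∀ j ∈ range L,
      linkEnergy A b c β (Function.update z (m + 1) (z (m + 1) + t • v)) j =
        linkEnergy A b c β z j
          + (if j = m then 2 * t * ⟪outputGrad A b c β z m, v⟫ + t ^ 2 * q₁ else 0)
          + (if j = m + 1 then 2 * t * ⟪inputGrad A b c β z (m + 1), v⟫ + t ^ 2 * q₂ else 0) := by
    intro j _
    rcases eq_or_ne j m with rfl | hjm
    · rw [linkEnergy_update_succ, if_pos rfl, if_neg (Nat.succ_ne_self j).symm, add_zero]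
      exact add_assoc _ _ _
    rcases eq_or_ne j (m + 1) with rfl | hjm'
    · rw [linkEnergy_update_self, if_neg (Nat.succ_ne_self m), if_pos rfl, add_zero]
      exact add_assoc _ _ _
    · rw [linkEnergy_update_of_ne A b c β z hjm' (by omega), if_neg hjm, if_neg hjm']
      ring
  rw [energy, energy, sum_congr rfl hterm, sum_add_distrib, sum_add_distrib, sum_ite_eq',
    sum_ite_eq', layerGrad, inner_add_left]
  simp only [mem_range, if_pos hm]
  split_ifs
  · ring
  · rw [inner_zero_left]
    ring

lemma layerGrad_sub (L : ℕ) (z z' : ∀ k, E k) (m : ℕ) :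
    layerGrad A b c β L z m - layerGrad A b c β L z' m = layerGrad A 0 0 β L (z - z') m := by
  simp only [layerGrad, outputGrad, inputGrad, fwdResidual, bwdResidual, Pi.sub_apply,
    Pi.zero_apply, map_sub, sub_zero]
  split_ifs <;> module

lemma inner_outputGrad_add_inner_inputGrad (δ : ∀ k, E k) (j : ℕ) :
    ⟪outputGrad A 0 0 β δ j, δ (j + 1)⟫ + ⟪inputGrad A 0 0 β δ j, δ j⟫ =
      linkEnergy A 0 0 β δ j := by
  have hf : ‖fwdResidual A 0 δ j‖ ^ 2 =
      ⟪fwdResidual A 0 δ j, δ (j + 1)⟫ - ⟪fwdResidual A 0 δ j, A j (δ j)⟫ := by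
    rw [← inner_sub_right, ← real_inner_self_eq_norm_sq]
    congr 1
    simp [fwdResidual]
  have hr : ‖bwdResidual A 0 δ j‖ ^ 2 =
      ⟪bwdResidual A 0 δ j, adjoint (A j) (δ (j + 1))⟫ - ⟪bwdResidual A 0 δ j, δ j⟫ := by
    rw [← inner_sub_right, ← real_inner_self_eq_norm_sq]
    congr 1
    simp [bwdResidual]
  rw [outputGrad, inputGrad, linkEnergy, hf, hr, inner_add_left, inner_neg_left, inner_add_left,
    real_inner_smul_left, real_inner_smul_left, adjoint_inner_left, adjoint_inner_right]
  ring

lemma inner_outputGrad_zero_self (δ : ∀ k, E k) (j : ℕ) :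
    ⟪outputGrad A 0 0 β δ j, δ (j + 1)⟫ =
      ‖δ (j + 1)‖ ^ 2 + β (j + 1) * ‖adjoint (A j) (δ (j + 1))‖ ^ 2
        - (1 + β (j + 1)) * ⟪δ j, adjoint (A j) (δ (j + 1))⟫ := by
  simp only [outputGrad, fwdResidual, bwdResidual, Pi.zero_apply, sub_zero, inner_add_left,
    inner_sub_left, real_inner_smul_left, real_inner_self_eq_norm_sq]
  rw [← adjoint_inner_right, ← adjoint_inner_right, inner_sub_left, real_inner_self_eq_norm_sq]
  ring

lemma norm_succ_le_of_inner_outputGrad_nonpos {δ : ∀ k, E k} {j : ℕ} (hβ : β (j + 1) = 1)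
    (h : ⟪outputGrad A 0 0 β δ j, δ (j + 1)⟫ ≤ 0) : ‖δ (j + 1)‖ ≤ ‖δ j‖ := by
  rw [inner_outputGrad_zero_self, hβ] at h
  have hcs := real_inner_le_norm (δ j) (adjoint (A j) (δ (j + 1)))
  have hamgm := two_mul_le_add_sq ‖δ j‖ ‖adjoint (A j) (δ (j + 1))‖
  exact (pow_le_pow_iff_left₀ (norm_nonneg _) (norm_nonneg _) two_ne_zero).1 (by linarith)

lemma norm_succ_le_opNorm_mul_of_inner_outputGrad_nonpos {δ : ∀ k, E k} {j : ℕ}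
    (hβ : β (j + 1) = 0) (h : ⟪outputGrad A 0 0 β δ j, δ (j + 1)⟫ ≤ 0) :
    ‖δ (j + 1)‖ ≤ ‖A j‖ * ‖δ j‖ := by
  rw [inner_outputGrad_zero_self, hβ, adjoint_inner_right] at h
  exact (norm_le_of_norm_sq_le_inner (by linarith)).trans ((A j).le_opNorm (δ j))

variable {L : ℕ} {C : ∀ k, Set (E k)}

lemma inner_layerGrad_nonneg_of_isMinOn {x : E 0} {z : ∀ k, E k} (hz : z ∈ feasibleSet L C x)
    (hmin : IsMinOn (energy A b c β L) (feasibleSet L C x) z) {m : ℕ} (hm : m < L)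
    (hC : Convex ℝ (C (m + 1))) {w : E (m + 1)} (hw : w ∈ C (m + 1)) :
    0 ≤ ⟪layerGrad A b c β L z m, w - z (m + 1)⟫ := by
  obtain ⟨γ, hγ⟩ := energy_update_add_smul A b c β hm z (w - z (m + 1))
  refine nonneg_of_forall_nonneg_mul_add_mul_sq (γ := γ) fun t ht₀ ht₁ => ?_
  have hmem := update_mem_feasibleSet hz (Nat.succ_pos m)
    (hC.add_smul_sub_mem (hz.2 _ (Nat.succ_pos m) hm) hw ⟨ht₀.le, ht₁⟩)
  have hle := isMinOn_iff.1 hmin _ hmem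
  rw [hγ] at hle
  linarith

lemma inner_layerGrad_sub_nonpos {x x' : E 0} {z z' : ∀ k, E k}
    (hz : z ∈ feasibleSet L C x) (hmin : IsMinOn (energy A b c β L) (feasibleSet L C x) z)
    (hz' : z' ∈ feasibleSet L C x') (hmin' : IsMinOn (energy A b c β L) (feasibleSet L C x') z')
    {m : ℕ} (hm : m < L) (hC : Convex ℝ (C (m + 1))) :
    ⟪layerGrad A 0 0 β L (z - z') m, (z - z') (m + 1)⟫ ≤ 0 := by
  have h := inner_layerGrad_nonneg_of_isMinOn A b c β hz hmin hm hC (hz'.2 _ (Nat.succ_pos m) hm)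
  have h' := inner_layerGrad_nonneg_of_isMinOn A b c β hz' hmin' hm hC (hz.2 _ (Nat.succ_pos m) hm)
  rw [← neg_sub, inner_neg_right] at h
  rw [← layerGrad_sub, Pi.sub_apply, inner_sub_left]
  linarith

lemma inner_outputGrad_nonpos {δ : ∀ k, E k} (hβ : ∀ j < L, 0 ≤ β (j + 1))
    (hδ : ∀ m < L, ⟪layerGrad A 0 0 β L δ m, δ (m + 1)⟫ ≤ 0) :
    ∀ m < L, ⟪outputGrad A 0 0 β δ m, δ (m + 1)⟫ ≤ 0 := by
  intro m hm
  induction hk : L - (m + 1) generalizing m with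
  | zero =>
    have h := hδ m hm
    rwa [layerGrad, if_neg (by omega), add_zero] at h
  | succ k ih =>
    have hnext := ih (m + 1) (by omega) (by omega)
    have heuler := inner_outputGrad_add_inner_inputGrad A β δ (m + 1)
    have hlink := linkEnergy_nonneg A 0 0 β δ (hβ (m + 1) (by omega))
    have h := hδ m hm
    rw [layerGrad, if_pos (by omega), inner_add_left] at h
    linarith

theorem norm_sub_le_opNorm_mul_of_isMinOn {n : ℕ} (hC : ∀ k, 1 ≤ k → k ≤ n + 1 → Convex ℝ (C k))
    (hβ : ∀ k, 1 ≤ k → k < n + 1 → β k = 1) (hβL : β (n + 1) = 0)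
    {x x' : E 0} {z z' : ∀ k, E k}
    (hz : z ∈ feasibleSet (n + 1) C x)
    (hmin : IsMinOn (energy A b c β (n + 1)) (feasibleSet (n + 1) C x) z)
    (hz' : z' ∈ feasibleSet (n + 1) C x')
    (hmin' : IsMinOn (energy A b c β (n + 1)) (feasibleSet (n + 1) C x') z') :
    ‖z (n + 1) - z' (n + 1)‖ ≤ ‖A n‖ * ‖x - x'‖ := by
  set δ := z - z'
  have hβ₀ : ∀ j < n + 1, 0 ≤ β (j + 1) := fun j hj => by
    rcases Nat.lt_succ_iff_lt_or_eq.1 hj with hj | rfl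
    · rw [hβ (j + 1) (by omega) (by omega)]
      exact zero_le_one
    · rw [hβL]
  have hout := inner_outputGrad_nonpos A β hβ₀ fun m hm =>
    inner_layerGrad_sub_nonpos A b c β hz hmin hz' hmin' hm (hC _ (by omega) hm)
  have hchain : ∀ m ≤ n, ‖δ m‖ ≤ ‖δ 0‖ := by
    intro m hm
    induction m with
    | zero => exact le_rfl
    | succ m ih =>
      exact (norm_succ_le_of_inner_outputGrad_nonpos A β (hβ _ (by omega) (by omega))
        (hout m (by omega))).trans (ih (by omega))
  calc ‖δ (n + 1)‖ ≤ ‖A n‖ * ‖δ n‖ :=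
        norm_succ_le_opNorm_mul_of_inner_outputGrad_nonpos A β hβL (hout n n.lt_succ_self)
    _ ≤ ‖A n‖ * ‖δ 0‖ := by gcongr; exact hchain n le_rfl
    _ = ‖A n‖ * ‖x - x'‖ := by simp only [δ, Pi.sub_apply, hz.1, hz'.1]

end LiftedNetwork

end

lemma Matrix.toEuclideanLin_transpose_apply {m n : Type*} [Fintype m] [Fintype n] [DecidableEq m]
    [DecidableEq n] (W : Matrix m n ℝ) (u : EuclideanSpace ℝ m) :
    toEuclideanLin Wᵀ u = adjoint (LinearMap.toContinuousLinearMap (toEuclideanLin W)) u := by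
  rw [← conjTranspose_eq_transpose_of_trivial, toEuclideanLin_conjTranspose_eq_adjoint]
  rfl

theorem stmt9_general (L : ℕ) (hL : 0 < L)
    (d : ℕ → ℕ)
    (W : (k : ℕ) → Matrix (Fin (d (k + 1))) (Fin (d k)) ℝ)
    (b : (k : ℕ) → EuclideanSpace ℝ (Fin (d (k + 1))))
    (c : (k : ℕ) → EuclideanSpace ℝ (Fin (d k)))
    (β : ℕ → ℝ) (hβ1 : ∀ k, 1 ≤ k → k < L → β k = 1) (hβL : β L = 0)
    (C : (k : ℕ) → Set (EuclideanSpace ℝ (Fin (d k))))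
    (hCcv : ∀ k, 1 ≤ k → k ≤ L → Convex ℝ (C k))
    (E : ((k : ℕ) → EuclideanSpace ℝ (Fin (d k))) → ℝ)
    (hE : ∀ z, E z = (1/2) * ∑ k ∈ Finset.range L,
        (‖z (k + 1) - Matrix.toEuclideanLin (W k) (z k) - b k‖ ^ 2
          + β (k + 1) * ‖Matrix.toEuclideanLin (W k)ᵀ (z (k + 1)) - z k - c k‖ ^ 2))
    (x x' : EuclideanSpace ℝ (Fin (d 0)))
    (zs zs' : (k : ℕ) → EuclideanSpace ℝ (Fin (d k)))
    (hzs : zs 0 = x ∧ (∀ k, 1 ≤ k → k ≤ L → zs k ∈ C k) ∧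
      ∀ z, z 0 = x → (∀ k, 1 ≤ k → k ≤ L → z k ∈ C k) → E zs ≤ E z)
    (hzs' : zs' 0 = x' ∧ (∀ k, 1 ≤ k → k ≤ L → zs' k ∈ C k) ∧
      ∀ z, z 0 = x' → (∀ k, 1 ≤ k → k ≤ L → z k ∈ C k) → E zs' ≤ E z) :
    ‖zs L - zs' L‖ ≤
      ‖LinearMap.toContinuousLinearMap (𝕜 := ℝ) (E := EuclideanSpace ℝ (Fin (d (L - 1))))
          (F' := EuclideanSpace ℝ (Fin (d (L - 1 + 1)))) (Matrix.toEuclideanLin (W (L - 1)))‖ * ‖x - x'‖ := by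
  obtain ⟨n, rfl⟩ : ∃ n, L = n + 1 := ⟨L - 1, by omega⟩
  let A k := LinearMap.toContinuousLinearMap (toEuclideanLin (W k))
  have hEA : E = LiftedNetwork.energy A b c β (n + 1) := funext fun z => by
    simp only [hE, LiftedNetwork.energy, LiftedNetwork.linkEnergy, LiftedNetwork.fwdResidual,
      LiftedNetwork.bwdResidual, Matrix.toEuclideanLin_transpose_apply, A,
      LinearMap.coe_toContinuousLinearMap']
  subst hEA
  simpa using LiftedNetwork.norm_sub_le_opNorm_mul_of_isMinOn A b c β hCcv hβ1 hβL
    ⟨hzs.1, hzs.2.1⟩ (isMinOn_iff.2 fun z hz => hzs.2.2 z hz.1 hz.2)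
    ⟨hzs'.1, hzs'.2.1⟩ (isMinOn_iff.2 fun z hz => hzs'.2.2 z hz.1 hz.2)

/-- (Corollary to Theorem 1.) In an `L`-layer lifted
regression/reconstruction network with `β₁ = ⋯ = β_{L-1} = 1` and `β_L = 0`
(pure regression output layer), the map from the input `x` to the minimizing
last-layer activations `z*_L` is Lipschitz with constant at most `‖W_{L-1}‖₂`. -/
theorem stmt9 (L : ℕ) (hL : 0 < L)
    (d : ℕ → ℕ) (hd : ∀ k, k ≤ L → 0 < d k)
    (W : (k : ℕ) → Matrix (Fin (d (k + 1))) (Fin (d k)) ℝ)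
    (b : (k : ℕ) → EuclideanSpace ℝ (Fin (d (k + 1))))
    (c : (k : ℕ) → EuclideanSpace ℝ (Fin (d k)))
    (β : ℕ → ℝ) (hβ1 : ∀ k, 1 ≤ k → k < L → β k = 1) (hβL : β L = 0)
    (C : (k : ℕ) → Set (EuclideanSpace ℝ (Fin (d k))))
    (hCne : ∀ k, 1 ≤ k → k ≤ L → (C k).Nonempty)
    (hCcl : ∀ k, 1 ≤ k → k ≤ L → IsClosed (C k))
    (hCcv : ∀ k, 1 ≤ k → k ≤ L → Convex ℝ (C k))
    (E : ((k : ℕ) → EuclideanSpace ℝ (Fin (d k))) → ℝ)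
    (hE : ∀ z, E z = (1/2) * ∑ k ∈ Finset.range L,
        (‖z (k + 1) - Matrix.toEuclideanLin (W k) (z k) - b k‖ ^ 2
          + β (k + 1) * ‖Matrix.toEuclideanLin (W k)ᵀ (z (k + 1)) - z k - c k‖ ^ 2))
    (x x' : EuclideanSpace ℝ (Fin (d 0)))
    (zs zs' : (k : ℕ) → EuclideanSpace ℝ (Fin (d k)))
    (hzs : zs 0 = x ∧ (∀ k, 1 ≤ k → k ≤ L → zs k ∈ C k) ∧
      ∀ z, z 0 = x → (∀ k, 1 ≤ k → k ≤ L → z k ∈ C k) → E zs ≤ E z)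
    (hzs' : zs' 0 = x' ∧ (∀ k, 1 ≤ k → k ≤ L → zs' k ∈ C k) ∧
      ∀ z, z 0 = x' → (∀ k, 1 ≤ k → k ≤ L → z k ∈ C k) → E zs' ≤ E z) :
    ‖zs L - zs' L‖ ≤
      ‖LinearMap.toContinuousLinearMap (𝕜 := ℝ) (E := EuclideanSpace ℝ (Fin (d (L - 1))))
          (F' := EuclideanSpace ℝ (Fin (d (L - 1 + 1)))) (Matrix.toEuclideanLin (W (L - 1)))‖ * ‖x - x'‖ :=
  stmt9_general L hL d W b c β hβ1 hβL C hCcv E hE x x' zs zs' hzs hzs'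
end
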